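/- arXiv:2411.06187 — 7 statements merged into one kernel-verified Lean document; each statement's English description precedes it below -/
import Mathlib

section
/- (Theorem 2.) Suppose additionally r₁ > 0 and r̄ > 0. If the bribe fractions satisfy δ·c₅₂·ε₁ + η·c₅₄·ε₂ < δ·(c₅₂ − c₅₂') + η·(c₅₄ − c₅₄'), then the BM-PAW attacker obtains strictly more reward than the PAW attacker: R_a^{BM-PAW}(r₁,r₂) > R_a^{PAW}(r₁,r₂). -/
/-- Theorem 2: under the bribe condition, the BM-PAW attacker earns strictly more than the PAW attacker. -/
theorem bmpaw_beats_paw_for_attacker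
    (α β η δ γ r₁ r₂ rbar ε₁ ε₂ : ℝ)
    (hα : 0 < α) (hβ : 0 < β) (hη : 0 ≤ η) (hsum : α + β + η < 1)
    (hδ : δ = 1 - α - β - η)
    (hγ : γ ∈ Set.Icc (0:ℝ) 1)
    (hr₁ : r₁ ∈ Set.Icc (0:ℝ) 1) (hr₂ : r₂ ∈ Set.Icc (0:ℝ) 1)
    (hrbar : rbar ∈ Set.Icc (0:ℝ) 1)
    (hε₁ : ε₁ ∈ Set.Icc (0:ℝ) 1) (hε₂ : ε₂ ∈ Set.Icc (0:ℝ) 1)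
    (c52 c54 c52' c54' : ℝ)
    (hc52 : c52 = ((1 - r₂) * α + η + β + γ * δ) / (1 - r₂ * α))
    (hc54 : c54 = 1)
    (hc52' : c52' = ((1 - r₂) * α + β + γ * (δ + η)) / (1 - r₂ * α))
    (hc54' : c54' = ((1 - r₂) * α + β + γ * δ) / (1 - r₂ * α))
    (RIMR RSR RFR RBM RFR' RBMPAW RPAW : ℝ)
    (hIMR : RIMR = (1 - r₁) * α + r₁ * α * ((1 - r₂) * α / (1 - r₂ * α)))
    (hSR : RSR = β * (r₁ * α / (r₁ * α + β))
      + r₁ * α * (β / (1 - r₂ * α)) * (rbar * α / (rbar * α + β)))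
    (hFR : RFR = r₁ * α * ((c52 * δ + c54 * η) / (1 - r₂ * α))
      * (rbar * α / (rbar * α + β)))
    (hBM : RBM = r₁ * α * ((ε₁ * c52 * δ + ε₂ * c54 * η) / (1 - r₂ * α))
      * (rbar * α / (rbar * α + β)))
    (hFR' : RFR' = r₁ * α * ((c52' * δ + c54' * η) / (1 - r₂ * α))
      * (rbar * α / (rbar * α + β)))
    (hBMPAW : RBMPAW = RIMR + RSR + RFR - RBM)
    (hPAW : RPAW = RIMR + RSR + RFR')
    (hr₁pos : 0 < r₁) (hrbarpos : 0 < rbar)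
    (hcond : δ * c52 * ε₁ + η * c54 * ε₂ < δ * (c52 - c52') + η * (c54 - c54'))
    :
    RBMPAW > RPAW := by
  have h1 : 0 < 1 - r₂ * α := by nlinarith [hr₂.1, hr₂.2]
  have hK : 0 < rbar * α / (rbar * α + β) := by positivity
  have hX : 0 < (c52 * δ + c54 * η) - (ε₁ * c52 * δ + ε₂ * c54 * η)
      - (c52' * δ + c54' * η) := by nlinarith [hcond]
  have key : 0 < r₁ * α * (((c52 * δ + c54 * η) - (ε₁ * c52 * δ + ε₂ * c54 * η)
      - (c52' * δ + c54' * η)) / (1 - r₂ * α)) * (rbar * α / (rbar * α + β)) := by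
    have := div_pos hX h1
    positivity
  rw [hBMPAW, hPAW, hFR, hBM, hFR']
  have hexp : r₁ * α * ((c52 * δ + c54 * η) / (1 - r₂ * α)) * (rbar * α / (rbar * α + β))
      - r₁ * α * ((ε₁ * c52 * δ + ε₂ * c54 * η) / (1 - r₂ * α)) * (rbar * α / (rbar * α + β))
      - r₁ * α * ((c52' * δ + c54' * η) / (1 - r₂ * α)) * (rbar * α / (rbar * α + β))
      = r₁ * α * (((c52 * δ + c54 * η) - (ε₁ * c52 * δ + ε₂ * c54 * η)
      - (c52' * δ + c54' * η)) / (1 - r₂ * α)) * (rbar * α / (rbar * α + β)) := by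
    field_simp
  linarith [key, hexp.ge, hexp.le]
end

section
/- Suppose additionally r₁ > 0 and r̄ > 0. Then R_a^{BM-PAW}(r₁,r₂) > R_a^{PAW}(r₁,r₂) holds if and only if δ·c₅₂·ε₁ + η·c₅₄·ε₂ < δ·(c₅₂ − c₅₂') + η·(c₅₄ − c₅₄'); that is, the bribe condition of Theorem 2 exactly characterizes when BM-PAW strictly dominates PAW for the attacker. -/
/-- The bribe condition of Theorem 2 exactly characterizes when BM-PAW strictly dominates PAW for the attacker. -/
theorem bmpaw_beats_paw_iff
    (α β η δ γ r₁ r₂ rbar ε₁ ε₂ : ℝ)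
    (hα : 0 < α) (hβ : 0 < β) (hη : 0 ≤ η) (hsum : α + β + η < 1)
    (hδ : δ = 1 - α - β - η)
    (hγ : γ ∈ Set.Icc (0:ℝ) 1)
    (hr₁ : r₁ ∈ Set.Icc (0:ℝ) 1) (hr₂ : r₂ ∈ Set.Icc (0:ℝ) 1)
    (hrbar : rbar ∈ Set.Icc (0:ℝ) 1)
    (hε₁ : ε₁ ∈ Set.Icc (0:ℝ) 1) (hε₂ : ε₂ ∈ Set.Icc (0:ℝ) 1)
    (c52 c54 c52' c54' : ℝ)
    (hc52 : c52 = ((1 - r₂) * α + η + β + γ * δ) / (1 - r₂ * α))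
    (hc54 : c54 = 1)
    (hc52' : c52' = ((1 - r₂) * α + β + γ * (δ + η)) / (1 - r₂ * α))
    (hc54' : c54' = ((1 - r₂) * α + β + γ * δ) / (1 - r₂ * α))
    (RIMR RSR RFR RBM RFR' RBMPAW RPAW : ℝ)
    (hIMR : RIMR = (1 - r₁) * α + r₁ * α * ((1 - r₂) * α / (1 - r₂ * α)))
    (hSR : RSR = β * (r₁ * α / (r₁ * α + β))
      + r₁ * α * (β / (1 - r₂ * α)) * (rbar * α / (rbar * α + β)))
    (hFR : RFR = r₁ * α * ((c52 * δ + c54 * η) / (1 - r₂ * α))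
      * (rbar * α / (rbar * α + β)))
    (hBM : RBM = r₁ * α * ((ε₁ * c52 * δ + ε₂ * c54 * η) / (1 - r₂ * α))
      * (rbar * α / (rbar * α + β)))
    (hFR' : RFR' = r₁ * α * ((c52' * δ + c54' * η) / (1 - r₂ * α))
      * (rbar * α / (rbar * α + β)))
    (hBMPAW : RBMPAW = RIMR + RSR + RFR - RBM)
    (hPAW : RPAW = RIMR + RSR + RFR')
    (hr₁pos : 0 < r₁) (hrbarpos : 0 < rbar)
    :
    RBMPAW > RPAW ↔
      δ * c52 * ε₁ + η * c54 * ε₂ < δ * (c52 - c52') + η * (c54 - c54') := by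
  obtain ⟨hr₂0, hr₂1⟩ := hr₂
  have h1 : 0 < 1 - r₂ * α := by nlinarith
  have hden : 0 < rbar * α + β := by positivity
  have hK : 0 < r₁ * α / (1 - r₂ * α) * (rbar * α / (rbar * α + β)) := by positivity
  have key : RBMPAW - RPAW = r₁ * α / (1 - r₂ * α) * (rbar * α / (rbar * α + β)) *
      (δ * (c52 - c52') + η * (c54 - c54') - (δ * c52 * ε₁ + η * c54 * ε₂)) := by
    subst hBMPAW hPAW hFR hBM hFR'
    field_simp
    ring
  constructor
  · intro h
    have h2 : 0 < RBMPAW - RPAW := by linarith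
    rw [key] at h2
    by_contra hcon
    push_neg at hcon
    have : δ * (c52 - c52') + η * (c54 - c54') - (δ * c52 * ε₁ + η * c54 * ε₂) ≤ 0 := by
      linarith
    nlinarith [mul_nonpos_of_nonneg_of_nonpos hK.le this]
  · intro h
    have h2 : 0 < δ * (c52 - c52') + η * (c54 - c54') - (δ * c52 * ε₁ + η * c54 * ε₂) := by linarith
    have := mul_pos hK h2
    rw [← key] at this
    linarith
end

section
/- (Theorem 1, first part.) Assume 0 < α < 1/2, β > 0, η > 0, δ = 1−α−β−η > 0 and 0 ≤ γ < 1. Then there exist an infiltration fraction r ∈ (0,1) and bribe fractions ε₁, ε₂ > 0 such that, taking r₁ = r₂ = r̄ = r, the BM-PAW attacker's reward strictly exceeds the honest-mining reward: R_a^{BM-PAW}(r,r) > α. -/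
set_option maxHeartbeats 1000000

lemma bmpaw_aux (x β α N d e : ℝ) (hD : 1 - x ≠ 0) (hS : x + β ≠ 0) :
    α - x + x * ((α - x) / (1 - x)) +
        (β * (x / (x + β)) + x * (β / (1 - x)) * (x / (x + β))) +
        x * ((N / (1 - x) * d + 1 * e) / (1 - x)) * (x / (x + β)) -
        x * ((1/2 * (N / (1 - x)) * d + 1/2 * 1 * e) / (1 - x)) * (x / (x + β)) - α
    = (x * (α * β * (1 - x) + x * ((N * d + e * (1 - x)) / 2 - (1 - α) * (1 - x))))
        / ((1 - x)^2 * (x + β)) := by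
  rw [eq_div_iff (mul_ne_zero (pow_ne_zero 2 hD) hS)]
  field_simp
  ring

/-- Theorem 1, first part: there exist an infiltration fraction `r ∈ (0,1)` and
positive bribe fractions `ε₁, ε₂` such that, with `r₁ = r₂ = r̄ = r`, the BM-PAW
attacker's reward strictly exceeds the honest-mining reward `α`. -/
theorem bmpaw_beats_honest_mining
    (α β η γ : ℝ)
    (hα : 0 < α) (hα2 : α < 1 / 2) (hβ : 0 < β) (hη : 0 < η)
    (hδ : 0 < 1 - α - β - η) (hγ0 : 0 ≤ γ) (hγ1 : γ < 1) :
    ∃ r ∈ Set.Ioo (0:ℝ) 1, ∃ ε₁ > (0:ℝ), ∃ ε₂ > (0:ℝ),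
      (let δ := 1 - α - β - η
       let c52 := ((1 - r) * α + η + β + γ * δ) / (1 - r * α)
       let c54 := (1:ℝ)
       let RIMR := (1 - r) * α + r * α * ((1 - r) * α / (1 - r * α))
       let RSR := β * (r * α / (r * α + β))
         + r * α * (β / (1 - r * α)) * (r * α / (r * α + β))
       let RFR := r * α * ((c52 * δ + c54 * η) / (1 - r * α))
         * (r * α / (r * α + β))
       let RBM := r * α * ((ε₁ * c52 * δ + ε₂ * c54 * η) / (1 - r * α))
         * (r * α / (r * α + β))
       RIMR + RSR + RFR - RBM) > α := by
  have hβ1 : β < 1 := by linarith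
  refine ⟨β/2, ⟨by positivity, by linarith⟩, 1/2, by norm_num, 1/2, by norm_num, ?_⟩
  have hr0 : (0:ℝ) < β/2 := by positivity
  have hr1 : β/2 < 1 := by linarith
  have hD : 0 < 1 - β/2*α := by nlinarith
  have hS : 0 < β/2*α + β := by positivity
  have hN : 0 ≤ α - β/2*α + η + β + γ*(1-α-β-η) := by
    nlinarith [mul_nonneg hγ0 hδ.le]
  have h1 : 0 < α*(1-β/2*α)*β*(1+α) := by positivity
  have h2 : 0 ≤ β/2*α*((α - β/2*α + η + β + γ*(1-α-β-η))*(1-α-β-η)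
      + η*(1-β/2*α)) :=
    mul_nonneg (by positivity)
      (add_nonneg (mul_nonneg hN hδ.le) (mul_nonneg hη.le hD.le))
  have h3 : 0 < β/2*α * (α*β*(1-β/2*α)
      + β/2*α*(((α - β/2*α + η + β + γ*(1-α-β-η))*(1-α-β-η)
        + η*(1-β/2*α))/2 - (1-α)*(1-β/2*α))) := by
    have hP : 0 < α*β*(1-β/2*α)
        + β/2*α*(((α - β/2*α + η + β + γ*(1-α-β-η))*(1-α-β-η)
          + η*(1-β/2*α))/2 - (1-α)*(1-β/2*α)) := by
      nlinarith [h1, h2]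
    exact mul_pos (by positivity) hP
  show _ > α
  simp only
  rw [gt_iff_lt, ← sub_pos]
  rw [show (1 - β/2)*α = α - β/2*α from by ring]
  rw [bmpaw_aux (β/2*α) β α (α - β/2*α + η + β + γ*(1-α-β-η)) (1-α-β-η) η
    hD.ne' hS.ne']
  exact div_pos h3 (by positivity)
end

section
/- (Theorem 3.) Suppose additionally r₁ > 0, r̄ > 0 and η > 0. If the bribe fractions satisfy δ·c₅₂·ε₁ + η·c₅₄·ε₂ > η·(1 − c₅₄')·(r̄α+β)/(r̄α), then the target pool obtains strictly more reward in BM-PAW than in PAW: R_t^{BM-PAW}(r₁,r₂) > R_t^{PAW}(r₁,r₂). -/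
/-- Theorem 3: under the bribe condition, the target pool earns strictly more in BM-PAW than in PAW. -/
theorem bmpaw_beats_paw_for_target
    (α β η δ γ r₁ r₂ rbar ε₁ ε₂ : ℝ)
    (hα : 0 < α) (hβ : 0 < β) (hη : 0 ≤ η) (hsum : α + β + η < 1)
    (hδ : δ = 1 - α - β - η)
    (hγ : γ ∈ Set.Icc (0:ℝ) 1)
    (hr₁ : r₁ ∈ Set.Icc (0:ℝ) 1) (hr₂ : r₂ ∈ Set.Icc (0:ℝ) 1)
    (hrbar : rbar ∈ Set.Icc (0:ℝ) 1)
    (hε₁ : ε₁ ∈ Set.Icc (0:ℝ) 1) (hε₂ : ε₂ ∈ Set.Icc (0:ℝ) 1)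
    (c52 c54 c52' c54' : ℝ)
    (hc52 : c52 = ((1 - r₂) * α + η + β + γ * δ) / (1 - r₂ * α))
    (hc54 : c54 = 1)
    (hc52' : c52' = ((1 - r₂) * α + β + γ * (δ + η)) / (1 - r₂ * α))
    (hc54' : c54' = ((1 - r₂) * α + β + γ * δ) / (1 - r₂ * α))
    (RtBMPAW RtPAW : ℝ)
    (htBMPAW : RtBMPAW = η
      + r₁ * α * (δ / (1 - r₂ * α) + η / (1 - r₂ * α)) * (η / (1 - r₂ * α))
      + r₁ * α * (ε₁ * c52 * (δ / (1 - r₂ * α)) + ε₂ * c54 * (η / (1 - r₂ * α)))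
        * (rbar * α / (rbar * α + β)))
    (htPAW : RtPAW = η
      + r₁ * α * (δ / (1 - r₂ * α)) * (η / (1 - r₂ * α))
      + r₁ * α * (η / (1 - r₂ * α)) * (1 - c54' + η / (1 - r₂ * α)))
    (hr₁pos : 0 < r₁) (hrbarpos : 0 < rbar) (hηpos : 0 < η)
    (hcond : δ * c52 * ε₁ + η * c54 * ε₂ > η * (1 - c54') * ((rbar * α + β) / (rbar * α)))
    :
    RtBMPAW > RtPAW := by
  have hD : 0 < 1 - r₂ * α := by nlinarith [hr₂.2, hr₂.1]
  have hs : 0 < rbar * α := mul_pos hrbarpos hα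
  have ht : 0 < rbar * α + β := by linarith
  have h1 : η * (1 - c54') * (rbar * α + β) < (δ * c52 * ε₁ + η * c54 * ε₂) * (rbar * α) := by
    have := mul_lt_mul_of_pos_right hcond hs
    calc η * (1 - c54') * (rbar * α + β)
        = η * (1 - c54') * ((rbar * α + β) / (rbar * α)) * (rbar * α) := by
          field_simp
      _ < (δ * c52 * ε₁ + η * c54 * ε₂) * (rbar * α) := this
  have hkey : η / (1 - r₂ * α) * (1 - c54')
      < (ε₁ * c52 * (δ / (1 - r₂ * α)) + ε₂ * c54 * (η / (1 - r₂ * α)))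
        * (rbar * α / (rbar * α + β)) := by
    rw [← sub_pos]
    have heq : (ε₁ * c52 * (δ / (1 - r₂ * α)) + ε₂ * c54 * (η / (1 - r₂ * α)))
        * (rbar * α / (rbar * α + β)) - η / (1 - r₂ * α) * (1 - c54')
        = ((δ * c52 * ε₁ + η * c54 * ε₂) * (rbar * α)
            - η * (1 - c54') * (rbar * α + β)) / ((1 - r₂ * α) * (rbar * α + β)) := by
      field_simp
    rw [heq]
    exact div_pos (by linarith) (mul_pos hD ht)
  have hra : 0 < r₁ * α := mul_pos hr₁pos hα
  have h2 := mul_lt_mul_of_pos_left hkey hra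
  rw [htBMPAW, htPAW]
  nlinarith [h2]
end

section
/- Suppose additionally r₁ > 0 and r̄ > 0. Then R_t^{BM-PAW}(r₁,r₂) > R_t^{PAW}(r₁,r₂) holds if and only if δ·c₅₂·ε₁ + η·c₅₄·ε₂ > η·(1 − c₅₄')·(r̄α+β)/(r̄α); that is, the bribe condition of Theorem 3 exactly characterizes when the target pool strictly gains by accepting the bribe. -/
/-!
Both rewards share the term `η`, and after subtracting, every remaining term carries the factor
`r₁ α / (1 - r₂ α)`. Pulling out in addition `r̄α / (r̄α + β)` leaves exactly the difference of the
two sides of the bribe condition, and the factor pulled out is positive since `r₂ α ≤ α < 1`.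
-/

theorem bmpaw_reward_sub_paw_reward {K : Type*} [Field K]
    {α β η δ r₁ D rbar ε₁ ε₂ c52 c54 c54' : K}
    (hD : D ≠ 0) (hα : α ≠ 0) (hrbar : rbar ≠ 0) (hK : rbar * α + β ≠ 0) :
    (η + r₁ * α * (δ / D + η / D) * (η / D)
        + r₁ * α * (ε₁ * c52 * (δ / D) + ε₂ * c54 * (η / D)) * (rbar * α / (rbar * α + β)))
      - (η + r₁ * α * (δ / D) * (η / D) + r₁ * α * (η / D) * (1 - c54' + η / D))
      = r₁ * α * (rbar * α) / (D * (rbar * α + β)) *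
          (δ * c52 * ε₁ + η * c54 * ε₂ - η * (1 - c54') * ((rbar * α + β) / (rbar * α))) := by
  -- `field_simp` only looks for the denominator in its normal form `α * rbar + β`.
  have hK' : α * rbar + β ≠ 0 := by rwa [mul_comm]
  field_simp
  ring

theorem bmpaw_target_gain_iff_general
    (α β η δ r₁ r₂ rbar ε₁ ε₂ : ℝ)
    (hα : 0 < α) (hβ : 0 < β) (hη : 0 ≤ η) (hsum : α + β + η < 1)
    (hr₂ : r₂ ∈ Set.Icc (0:ℝ) 1)
    (c52 c54 c54' : ℝ)
    (RtBMPAW RtPAW : ℝ)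
    (htBMPAW : RtBMPAW = η
      + r₁ * α * (δ / (1 - r₂ * α) + η / (1 - r₂ * α)) * (η / (1 - r₂ * α))
      + r₁ * α * (ε₁ * c52 * (δ / (1 - r₂ * α)) + ε₂ * c54 * (η / (1 - r₂ * α)))
        * (rbar * α / (rbar * α + β)))
    (htPAW : RtPAW = η
      + r₁ * α * (δ / (1 - r₂ * α)) * (η / (1 - r₂ * α))
      + r₁ * α * (η / (1 - r₂ * α)) * (1 - c54' + η / (1 - r₂ * α)))
    (hr₁pos : 0 < r₁) (hrbarpos : 0 < rbar)
    :
    RtBMPAW > RtPAW ↔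
      δ * c52 * ε₁ + η * c54 * ε₂ > η * (1 - c54') * ((rbar * α + β) / (rbar * α)) := by
  have hr₂α : r₂ * α ≤ α := mul_le_of_le_one_left hα.le hr₂.2
  have hD : 0 < 1 - r₂ * α := by linarith
  have hrα : 0 < rbar * α := mul_pos hrbarpos hα
  have hK : 0 < rbar * α + β := add_pos hrα hβ
  have hscale : 0 < r₁ * α * (rbar * α) / ((1 - r₂ * α) * (rbar * α + β)) := by positivity
  rw [gt_iff_lt, gt_iff_lt, ← sub_pos, htBMPAW, htPAW,
    bmpaw_reward_sub_paw_reward hD.ne' hα.ne' hrbarpos.ne' hK.ne', mul_pos_iff_of_pos_left hscale, sub_pos]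

/-- The bribe condition of Theorem 3 exactly characterizes when the target pool strictly gains by accepting the bribe. -/
theorem bmpaw_target_gain_iff
    (α β η δ γ r₁ r₂ rbar ε₁ ε₂ : ℝ)
    (hα : 0 < α) (hβ : 0 < β) (hη : 0 ≤ η) (hsum : α + β + η < 1)
    (hδ : δ = 1 - α - β - η)
    (hγ : γ ∈ Set.Icc (0:ℝ) 1)
    (hr₁ : r₁ ∈ Set.Icc (0:ℝ) 1) (hr₂ : r₂ ∈ Set.Icc (0:ℝ) 1)
    (hrbar : rbar ∈ Set.Icc (0:ℝ) 1)
    (hε₁ : ε₁ ∈ Set.Icc (0:ℝ) 1) (hε₂ : ε₂ ∈ Set.Icc (0:ℝ) 1)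
    (c52 c54 c52' c54' : ℝ)
    (hc52 : c52 = ((1 - r₂) * α + η + β + γ * δ) / (1 - r₂ * α))
    (hc54 : c54 = 1)
    (hc52' : c52' = ((1 - r₂) * α + β + γ * (δ + η)) / (1 - r₂ * α))
    (hc54' : c54' = ((1 - r₂) * α + β + γ * δ) / (1 - r₂ * α))
    (RtBMPAW RtPAW : ℝ)
    (htBMPAW : RtBMPAW = η
      + r₁ * α * (δ / (1 - r₂ * α) + η / (1 - r₂ * α)) * (η / (1 - r₂ * α))
      + r₁ * α * (ε₁ * c52 * (δ / (1 - r₂ * α)) + ε₂ * c54 * (η / (1 - r₂ * α)))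
        * (rbar * α / (rbar * α + β)))
    (htPAW : RtPAW = η
      + r₁ * α * (δ / (1 - r₂ * α)) * (η / (1 - r₂ * α))
      + r₁ * α * (η / (1 - r₂ * α)) * (1 - c54' + η / (1 - r₂ * α)))
    (hr₁pos : 0 < r₁) (hrbarpos : 0 < rbar)
    :
    RtBMPAW > RtPAW ↔
      δ * c52 * ε₁ + η * c54 * ε₂ > η * (1 - c54') * ((rbar * α + β) / (rbar * α)) :=
  bmpaw_target_gain_iff_general α β η δ r₁ r₂ rbar ε₁ ε₂ hα hβ hη hsum hr₂ c52 c54 c54' RtBMPAW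
    RtPAW htBMPAW htPAW hr₁pos hrbarpos
end

section
/- (Theorem 4.) Suppose additionally r₁ > 0, r̄ > 0, η > 0, δ > 0, and that the bribe-compatibility condition η·(1 − c₅₄')·(r̄α+β)/(r̄α) < δ·(c₅₂ − c₅₂') + η·(c₅₄ − c₅₄') holds. Then there exist bribe fractions ε₁, ε₂ ∈ (0,1) such that simultaneously R_a^{BM-PAW}(r₁,r₂) > R_a^{PAW}(r₁,r₂) and R_t^{BM-PAW}(r₁,r₂) > R_t^{PAW}(r₁,r₂); i.e., with a proper choice of bribe money both the attacker and the target pool strictly gain over PAW. -/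
set_option maxHeartbeats 1000000


/-- Theorem 4: under the bribe-compatibility condition
`η·(1 − c₅₄')·(r̄α+β)/(r̄α) < δ·(c₅₂ − c₅₂') + η·(c₅₄ − c₅₄')`, there exist bribe
fractions `ε₁, ε₂ ∈ (0,1)` making both the attacker and the target pool strictly
gain over PAW. -/
theorem bmpaw_incentive_compatibility
    (α β η δ γ r₁ r₂ rbar : ℝ)
    (hα : 0 < α) (hβ : 0 < β) (hη : 0 < η) (hsum : α + β + η < 1)
    (hδdef : δ = 1 - α - β - η) (hδ : 0 < δ)
    (hγ : γ ∈ Set.Icc (0:ℝ) 1)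
    (hr₁ : r₁ ∈ Set.Icc (0:ℝ) 1) (hr₂ : r₂ ∈ Set.Icc (0:ℝ) 1)
    (hrbar : rbar ∈ Set.Icc (0:ℝ) 1)
    (hr₁pos : 0 < r₁) (hrbarpos : 0 < rbar)
    (c52 c54 c52' c54' : ℝ)
    (hc52 : c52 = ((1 - r₂) * α + η + β + γ * δ) / (1 - r₂ * α))
    (hc54 : c54 = 1)
    (hc52' : c52' = ((1 - r₂) * α + β + γ * (δ + η)) / (1 - r₂ * α))
    (hc54' : c54' = ((1 - r₂) * α + β + γ * δ) / (1 - r₂ * α))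
    (RIMR RSR RFR RFR' RPAW RtPAW : ℝ)
    (hIMR : RIMR = (1 - r₁) * α + r₁ * α * ((1 - r₂) * α / (1 - r₂ * α)))
    (hSR : RSR = β * (r₁ * α / (r₁ * α + β))
      + r₁ * α * (β / (1 - r₂ * α)) * (rbar * α / (rbar * α + β)))
    (hFR : RFR = r₁ * α * ((c52 * δ + c54 * η) / (1 - r₂ * α))
      * (rbar * α / (rbar * α + β)))
    (hFR' : RFR' = r₁ * α * ((c52' * δ + c54' * η) / (1 - r₂ * α))
      * (rbar * α / (rbar * α + β)))
    (hPAW : RPAW = RIMR + RSR + RFR')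
    (htPAW : RtPAW = η
      + r₁ * α * (δ / (1 - r₂ * α)) * (η / (1 - r₂ * α))
      + r₁ * α * (η / (1 - r₂ * α)) * (1 - c54' + η / (1 - r₂ * α)))
    (RBM RBMPAW RtBMPAW : ℝ → ℝ → ℝ)
    (hBM : ∀ e₁ e₂, RBM e₁ e₂
      = r₁ * α * ((e₁ * c52 * δ + e₂ * c54 * η) / (1 - r₂ * α))
        * (rbar * α / (rbar * α + β)))
    (hBMPAW : ∀ e₁ e₂, RBMPAW e₁ e₂ = RIMR + RSR + RFR - RBM e₁ e₂)
    (htBMPAW : ∀ e₁ e₂, RtBMPAW e₁ e₂ = η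
      + r₁ * α * (δ / (1 - r₂ * α) + η / (1 - r₂ * α)) * (η / (1 - r₂ * α))
      + r₁ * α * (e₁ * c52 * (δ / (1 - r₂ * α)) + e₂ * c54 * (η / (1 - r₂ * α)))
        * (rbar * α / (rbar * α + β)))
    (hcompat : η * (1 - c54') * ((rbar * α + β) / (rbar * α))
      < δ * (c52 - c52') + η * (c54 - c54')) :
    ∃ ε₁ ∈ Set.Ioo (0:ℝ) 1, ∃ ε₂ ∈ Set.Ioo (0:ℝ) 1,
      RBMPAW ε₁ ε₂ > RPAW ∧ RtBMPAW ε₁ ε₂ > RtPAW := by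

  obtain ⟨hr₂0, hr₂1⟩ := hr₂
  obtain ⟨hγ0, hγ1⟩ := hγ
  have hq : 0 < 1 - r₂ * α := by linarith [mul_nonneg (sub_nonneg.2 hr₂1) hα.le]
  have hrb : 0 < rbar * α := mul_pos hrbarpos hα
  have hrbβ : 0 < rbar * α + β := by linarith
  have hw : 0 < rbar * α / (rbar * α + β) := by positivity
  have hc52pos : 0 ≤ c52 := by
    rw [hc52]; apply div_nonneg _ hq.le
    linarith [mul_nonneg (sub_nonneg.2 hr₂1) hα.le, mul_nonneg hγ0 hδ.le]
  have hc52'nn : 0 ≤ c52' := by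
    rw [hc52']; apply div_nonneg _ hq.le
    linarith [mul_nonneg (sub_nonneg.2 hr₂1) hα.le,
      mul_nonneg hγ0 (by linarith : (0:ℝ) ≤ δ + η)]
  have hc54'nn : 0 ≤ c54' := by
    rw [hc54']; apply div_nonneg _ hq.le
    linarith [mul_nonneg (sub_nonneg.2 hr₂1) hα.le, mul_nonneg hγ0 hδ.le]
  have hc54'lt : c54' < 1 := by
    rw [hc54', div_lt_one hq]
    linarith [mul_nonneg (sub_nonneg.2 hγ1) hδ.le]
  set L := η * (1 - c54') * ((rbar * α + β) / (rbar * α)) with hL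
  set U := δ * (c52 - c52') + η * (c54 - c54') with hU
  have hLpos : 0 < L := by
    apply mul_pos (mul_pos hη (by linarith)); positivity
  have hLU : L < U := hcompat
  have hDpos : 0 < c52 * δ + η := by linarith [mul_nonneg hc52pos hδ.le]
  have hUD : U ≤ c52 * δ + η := by
    rw [hU, hc54]
    linarith [mul_nonneg hδ.le hc52'nn, mul_nonneg hη.le hc54'nn]
  set t := (L + U) / 2 / (c52 * δ + η) with ht
  have ht0 : 0 < t := div_pos (by linarith) hDpos
  have ht1 : t < 1 := by rw [ht, div_lt_one hDpos]; linarith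
  have key : t * c52 * δ + t * c54 * η = (L + U) / 2 := by
    rw [ht, hc54]; field_simp
  have hLw : L * (rbar * α / (rbar * α + β)) = η * (1 - c54') := by
    rw [hL]; field_simp
  set K := r₁ * α * (rbar * α / (rbar * α + β)) / (1 - r₂ * α) with hK
  have hKpos : 0 < K := by rw [hK]; positivity
  refine ⟨t, ⟨ht0, ht1⟩, t, ⟨ht0, ht1⟩, ?_, ?_⟩
  · have eq1 : (RIMR + RSR + RFR - RBM t t) - RPAW = K * (U - (L + U) / 2) := by
      rw [hPAW, hFR, hFR', hBM, hU, hK]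
      linear_combination (-(r₁ * α * (rbar * α / (rbar * α + β)) / (1 - r₂ * α))) * key
    have hpos : 0 < K * (U - (L + U) / 2) := mul_pos hKpos (by linarith)
    rw [hBMPAW]
    linarith
  · have eq2 : RtBMPAW t t - RtPAW = K * ((L + U) / 2 - L) := by
      rw [htBMPAW, htPAW, hK]
      linear_combination (r₁ * α * (rbar * α / (rbar * α + β)) / (1 - r₂ * α)) * key
        + (r₁ * α / (1 - r₂ * α)) * hLw
    have hpos : 0 < K * ((L + U) / 2 - L) := mul_pos hKpos (by linarith)
    linarith
end

section
/- Suppose additionally r̄ > 0, η > 0 and δ > 0. Then the bribe-compatibility condition η·(1 − c₅₄')·(r̄α+β)/(r̄α) < δ·(c₅₂ − c₅₂') + η·(c₅₄ − c₅₄') holds if and only if β·(η + (1−γ)δ) < r̄α·δ·(1−γ). In particular, the window of bribe fractions making BM-PAW simultaneously profitable for the attacker and the target pool is nonempty exactly under this explicit inequality in α, β, η, δ, γ, r̄. -/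
/-!
With `D = 1 - r₂α > 0` and `E = η + (1 - γ)δ`, the definition of `δ` gives
`1 - c₅₄' = E / D` and `c₅₂ - c₅₂' = η(1 - γ) / D`. The term `η(1 - c₅₄')` then appears on both
sides, so the condition reduces to `η(E / D)·β / (r̄α) < δ·η(1 - γ) / D`, and clearing the positive
factor `η / (D·r̄α)` leaves `βE < r̄αδ(1 - γ)`.
-/

theorem mul_add_div_self_lt_add_iff {K : Type*} [Field K] [LinearOrder K] [IsStrictOrderedRing K]
    {a b p t : K} (hp : 0 < p) :
    a * ((p + b) / p) < t + a ↔ a * b < p * t := by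
  rw [show a * ((p + b) / p) = a * b / p + a by field_simp; ring, add_lt_add_iff_right,
    div_lt_iff₀' hp]

theorem bmpaw_compatibility_condition_iff_general
    (α β η δ γ r₂ rbar : ℝ)
    (hα : 0 < α) (hβ : 0 < β) (hsum : α + β + η < 1)
    (hδdef : δ = 1 - α - β - η)
    (hr₂ : r₂ ∈ Set.Icc (0:ℝ) 1)
    (hrbarpos : 0 < rbar) (hη : 0 < η)
    (c52 c54 c52' c54' : ℝ)
    (hc52 : c52 = ((1 - r₂) * α + η + β + γ * δ) / (1 - r₂ * α))
    (hc54 : c54 = 1)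
    (hc52' : c52' = ((1 - r₂) * α + β + γ * (δ + η)) / (1 - r₂ * α))
    (hc54' : c54' = ((1 - r₂) * α + β + γ * δ) / (1 - r₂ * α)) :
    (η * (1 - c54') * ((rbar * α + β) / (rbar * α))
        < δ * (c52 - c52') + η * (c54 - c54'))
      ↔ β * (η + (1 - γ) * δ) < rbar * α * δ * (1 - γ) := by
  have hD : 0 < 1 - r₂ * α :=
    sub_pos.2 (mul_lt_one_of_nonneg_of_lt_one_right hr₂.2 hα.le (by linarith))
  have hc54'_compl : 1 - c54' = (η + (1 - γ) * δ) / (1 - r₂ * α) := by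
    rw [hc54', hδdef]
    field_simp
    ring
  have hc52_sub : c52 - c52' = η * (1 - γ) / (1 - r₂ * α) := by
    rw [hc52, hc52']
    field_simp
    ring
  rw [hc54, hc52_sub, hc54'_compl, mul_add_div_self_lt_add_iff (mul_pos hrbarpos hα)]
  convert mul_lt_mul_iff_right₀ (div_pos hη hD) using 2 <;> ring

/-- The bribe-compatibility condition
`η·(1 − c₅₄')·(r̄α+β)/(r̄α) < δ·(c₅₂ − c₅₂') + η·(c₅₄ − c₅₄')` holds if and only if
`β·(η + (1−γ)δ) < r̄α·δ·(1−γ)`. -/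
theorem bmpaw_compatibility_condition_iff
    (α β η δ γ r₁ r₂ rbar : ℝ)
    (hα : 0 < α) (hβ : 0 < β) (hη0 : 0 ≤ η) (hsum : α + β + η < 1)
    (hδdef : δ = 1 - α - β - η)
    (hγ : γ ∈ Set.Icc (0:ℝ) 1)
    (hr₁ : r₁ ∈ Set.Icc (0:ℝ) 1) (hr₂ : r₂ ∈ Set.Icc (0:ℝ) 1)
    (hrbar : rbar ∈ Set.Icc (0:ℝ) 1)
    (hrbarpos : 0 < rbar) (hη : 0 < η) (hδ : 0 < δ)
    (c52 c54 c52' c54' : ℝ)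
    (hc52 : c52 = ((1 - r₂) * α + η + β + γ * δ) / (1 - r₂ * α))
    (hc54 : c54 = 1)
    (hc52' : c52' = ((1 - r₂) * α + β + γ * (δ + η)) / (1 - r₂ * α))
    (hc54' : c54' = ((1 - r₂) * α + β + γ * δ) / (1 - r₂ * α)) :
    (η * (1 - c54') * ((rbar * α + β) / (rbar * α))
        < δ * (c52 - c52') + η * (c54 - c54'))
      ↔ β * (η + (1 - γ) * δ) < rbar * α * δ * (1 - γ) :=
  bmpaw_compatibility_condition_iff_general α β η δ γ r₂ rbar hα hβ hsum hδdef hr₂ hrbarpos hη c52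
    c54 c52' c54' hc52 hc54 hc52' hc54'
end
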